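/- arXiv:2508.07556 — 2 statements merged into one kernel-verified Lean document; each statement's English description precedes it below -/
import Mathlib

section
/- Let μ be a probability measure on a measurable space 𝒳, let η : 𝒳 → [0,1] be measurable (the Bayes posterior), and let h : 𝒳 → {0,1} be measurable (the classifier). Define the correctness posterior η_h(x) = η(x) if h(x) = 1 and η_h(x) = 1 − η(x) if h(x) = 0, and the full-coverage accuracy a_full = ∫ η_h dμ. Fix a coverage level c ∈ (0,1], and let A and A⋆ be measurable sets with μ(A) = μ(A⋆) = c such that A⋆ is a top-c set of η_h, i.e. there exists t ∈ ℝ with μ({x : η_h(x) > t} \ A⋆) = 0 and μ(A⋆ \ {x : η_h(x) ≥ t}) = 0. Define the selective accuracy acc_c = (1/c)∫_A η_h dμ, the oracle accuracy acc̄ = min(1, a_full/c), the Bayes-noise term ε_Bayes = (1/c)∫_A (1 − max(η, 1−η)) dμ, the approximation term ε_approx = (1/c)∫_A (max(η, 1−η) − η_h) dμ, and the ranking term ε_rank = (1/c)(∫_{A⋆} η_h dμ − ∫_A η_h dμ). Then the selective classification gap satisfies acc̄ − acc_c ≤ ε_Bayes + ε_approx + ε_rank. -/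
open MeasureTheory

/-- Population version of the Selective Gap Bound: the deviation of the selective
accuracy from the oracle accuracy is bounded by the sum of the Bayes-noise,
approximation, and ranking terms. -/
theorem selective_classification_gap_bound
    {𝒳 : Type*} [MeasurableSpace 𝒳] (μ : Measure 𝒳) [IsProbabilityMeasure μ]
    (η : 𝒳 → ℝ) (hη_meas : Measurable η)
    (hη0 : ∀ x, 0 ≤ η x) (hη1 : ∀ x, η x ≤ 1)
    (h : 𝒳 → Bool) (hh_meas : Measurable h)
    (ηh : 𝒳 → ℝ) (hηh : ∀ x, ηh x = if h x then η x else 1 - η x)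
    (afull : ℝ) (hafull : afull = ∫ x, ηh x ∂μ)
    (c : ℝ) (hc0 : 0 < c) (hc1 : c ≤ 1)
    (A Astar : Set 𝒳) (hA : MeasurableSet A) (hAstar : MeasurableSet Astar)
    (hμA : μ A = ENNReal.ofReal c) (hμAstar : μ Astar = ENNReal.ofReal c)
    (htop : ∃ t : ℝ, μ ({x | t < ηh x} \ Astar) = 0 ∧ μ (Astar \ {x | t ≤ ηh x}) = 0)
    (accc accbar εBayes εapprox εrank : ℝ)
    (haccc : accc = (1 / c) * ∫ x in A, ηh x ∂μ)
    (haccbar : accbar = min 1 (afull / c))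
    (hεBayes : εBayes = (1 / c) * ∫ x in A, (1 - max (η x) (1 - η x)) ∂μ)
    (hεapprox : εapprox = (1 / c) * ∫ x in A, (max (η x) (1 - η x) - ηh x) ∂μ)
    (hεrank : εrank = (1 / c) * ((∫ x in Astar, ηh x ∂μ) - ∫ x in A, ηh x ∂μ)) :
    accbar - accc ≤ εBayes + εapprox + εrank := by
  have hηh_eq : ηh = fun x => if h x then η x else 1 - η x := funext hηh
  have hmeas : Measurable ηh := by
    rw [hηh_eq]
    have hset : MeasurableSet {a | h a = true} := hh_meas (measurableSet_singleton true)
    exact Measurable.ite hset hη_meas (measurable_const.sub hη_meas)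
  have hb0 : ∀ x, 0 ≤ ηh x := by
    intro x; rw [hηh]; split <;> [exact hη0 x; linarith [hη1 x]]
  have hb1 : ∀ x, ηh x ≤ 1 := by
    intro x; rw [hηh]; split <;> [exact hη1 x; linarith [hη0 x]]
  have hint : Integrable ηh μ := by
    refine (integrable_const (1 : ℝ)).mono' hmeas.aestronglyMeasurable ?_
    filter_upwards with x
    rw [Real.norm_eq_abs, abs_le]; exact ⟨by linarith [hb0 x], hb1 x⟩
  have hmax_meas : Measurable (fun x => max (η x) (1 - η x)) :=
    hη_meas.max (measurable_const.sub hη_meas)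
  have hmax_int : Integrable (fun x => max (η x) (1 - η x)) μ := by
    refine (integrable_const (1 : ℝ)).mono' hmax_meas.aestronglyMeasurable ?_
    filter_upwards with x
    rw [Real.norm_eq_abs, abs_le]
    constructor
    · linarith [le_max_left (η x) (1 - η x), hη0 x]
    · exact max_le (hη1 x) (by linarith [hη0 x])
  set S := ∫ x in A, ηh x ∂μ with hS
  set Sstar := ∫ x in Astar, ηh x ∂μ with hSstar
  -- key ranking inequality
  have key : S ≤ Sstar := by
    obtain ⟨t, ht1, ht2⟩ := htop
    have hBmeas : MeasurableSet (A \ Astar) := hA.diff hAstar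
    have hCmeas : MeasurableSet (Astar \ A) := hAstar.diff hA
    have hfin : μ (A ∩ Astar) ≠ ⊤ := (measure_lt_top μ _).ne
    have hμBC : μ (A \ Astar) = μ (Astar \ A) := by
      have h1 : μ (A ∩ Astar) + μ (A \ Astar) = μ A :=
        measure_inter_add_diff A hAstar
      have h2 : μ (Astar ∩ A) + μ (Astar \ A) = μ Astar :=
        measure_inter_add_diff Astar hA
      rw [Set.inter_comm] at h2
      have : μ (A ∩ Astar) + μ (A \ Astar) = μ (A ∩ Astar) + μ (Astar \ A) := by
        rw [h1, h2, hμA, hμAstar]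
      exact (ENNReal.add_right_inj hfin).mp this
    -- on A \ Astar, ηh ≤ t a.e.
    have hB_ae : ∀ᵐ x ∂μ.restrict (A \ Astar), ηh x ≤ t := by
      refine (ae_restrict_iff' hBmeas).mpr ?_
      rw [ae_iff]
      have : {x | ¬ (x ∈ A \ Astar → ηh x ≤ t)} ⊆ {x | t < ηh x} \ Astar := by
        intro x hx
        simp only [Set.mem_setOf_eq, Classical.not_imp, not_le] at hx
        exact ⟨hx.2, hx.1.2⟩
      exact measure_mono_null this ht1
    have hC_ae : ∀ᵐ x ∂μ.restrict (Astar \ A), t ≤ ηh x := by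
      refine (ae_restrict_iff' hCmeas).mpr ?_
      rw [ae_iff]
      have : {x | ¬ (x ∈ Astar \ A → t ≤ ηh x)} ⊆ Astar \ {x | t ≤ ηh x} := by
        intro x hx
        simp only [Set.mem_setOf_eq, Classical.not_imp, not_le] at hx
        exact ⟨hx.1.1, by simp only [Set.mem_setOf_eq]; linarith [hx.2]⟩
      exact measure_mono_null this ht2
    have hB_le : ∫ x in A \ Astar, ηh x ∂μ ≤ t * (μ (A \ Astar)).toReal := by
      have := integral_mono_ae (hint.integrableOn) (integrable_const t)
        (hB_ae)
      simpa [integral_const, smul_eq_mul, mul_comm, measureReal_def] using this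
    have hC_ge : t * (μ (Astar \ A)).toReal ≤ ∫ x in Astar \ A, ηh x ∂μ := by
      have := integral_mono_ae (integrable_const t) (hint.integrableOn) hC_ae
      simpa [integral_const, smul_eq_mul, mul_comm, measureReal_def] using this
    have hsplitA : (∫ x in A ∩ Astar, ηh x ∂μ) + ∫ x in A \ Astar, ηh x ∂μ = S :=
      integral_inter_add_diff hAstar hint.integrableOn
    have hsplitAstar : (∫ x in Astar ∩ A, ηh x ∂μ) + ∫ x in Astar \ A, ηh x ∂μ = Sstar :=
      integral_inter_add_diff hA hint.integrableOn
    rw [Set.inter_comm] at hsplitAstar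
    have : ∫ x in A \ Astar, ηh x ∂μ ≤ ∫ x in Astar \ A, ηh x ∂μ := by
      calc ∫ x in A \ Astar, ηh x ∂μ ≤ t * (μ (A \ Astar)).toReal := hB_le
        _ = t * (μ (Astar \ A)).toReal := by rw [hμBC]
        _ ≤ ∫ x in Astar \ A, ηh x ∂μ := hC_ge
    linarith
  have hμAr : (μ A).toReal = c := by rw [hμA, ENNReal.toReal_ofReal hc0.le]
  have hsum : (∫ x in A, (1 - max (η x) (1 - η x)) ∂μ)
      + (∫ x in A, (max (η x) (1 - η x) - ηh x) ∂μ) = c - S := by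
    have hi1 : IntegrableOn (fun x => 1 - max (η x) (1 - η x)) A μ :=
      ((integrable_const (1:ℝ)).sub hmax_int).integrableOn
    have hi2 : IntegrableOn (fun x => max (η x) (1 - η x) - ηh x) A μ :=
      (hmax_int.sub hint).integrableOn
    rw [← integral_add hi1 hi2]
    have heq : (fun x => (1 - max (η x) (1 - η x)) + (max (η x) (1 - η x) - ηh x))
        = fun x => 1 - ηh x := by funext x; ring
    simp only [heq]
    have hi3 : IntegrableOn (fun _ : 𝒳 => (1:ℝ)) A μ := (integrable_const (1:ℝ)).integrableOn
    rw [integral_sub hi3 hint.integrableOn, setIntegral_const, smul_eq_mul, mul_one, measureReal_def, hμAr]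
  have hrk : 0 ≤ (1 / c) * (Sstar - S) :=
    mul_nonneg (by positivity) (by linarith)
  have hmin : accbar ≤ 1 := by rw [haccbar]; exact min_le_left _ _
  have hEB : εBayes + εapprox = 1 - (1 / c) * S := by
    rw [hεBayes, hεapprox, ← mul_add, hsum]
    field_simp
  rw [hεrank, haccc]
  linarith
end

section
/- Define ReLU(x) = max(x, 0). Fix real numbers t, ε_LB, ε_UB, ε_CLIP, ε_AND with t − ε_LB ≥ 0, 0 < ε_AND ≤ ε_CLIP, and t − ε_LB + ε_CLIP ≤ t + ε_UB − ε_CLIP. Let o₁(x) = ReLU( ReLU(ReLU(x) − (t − ε_LB)) − ReLU(ReLU(x − ε_CLIP) − (t − ε_LB)) ) and o₂(x) = ReLU( ReLU(−ReLU(x) + (t + ε_UB)) − ReLU(−ReLU(x + ε_CLIP) + (t + ε_UB)) ), and define the composed widget A(x) = ReLU( o₁(x) + o₂(x) − (2ε_CLIP − ε_AND) ). Then: (i) for every x ∈ ℝ with x ≤ t − ε_LB or x ≥ t + ε_UB, A(x) = 0; (ii) for every x with t − ε_LB + ε_CLIP ≤ x ≤ t + ε_UB − ε_CLIP, A(x)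 = ε_AND; and (iii) 0 ≤ A(x) ≤ ε_AND for every x ∈ ℝ. -/
/-!
Both bound widgets are differences of two ReLU ramps offset by `εCLIP`, so since `relu` is
monotone and 1-Lipschitz they take values in `[0, εCLIP]`; the lower one vanishes left of
`t - εLB` and equals `εCLIP` right of `t - εLB + εCLIP`, the upper one symmetrically. The soft AND
subtracts `2 εCLIP - εAND`, so it never exceeds `εAND`, is `0` as soon as one input vanishes, and
is exactly `εAND` when both inputs are saturated at `εCLIP`.
-/

/-- The rectified linear unit. -/
noncomputable def relu (x : ℝ) : ℝ := max x 0

open Set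

lemma relu_nonneg (x : ℝ) : 0 ≤ relu x := le_max_right x 0

lemma relu_of_nonneg {x : ℝ} (hx : 0 ≤ x) : relu x = x := max_eq_left hx

lemma relu_of_nonpos {x : ℝ} (hx : x ≤ 0) : relu x = 0 := max_eq_right hx

lemma relu_sub_relu_mem_Icc {p q c : ℝ} (hpq : p ≤ q) (hqp : q ≤ p + c) :
    relu q - relu p ∈ Icc 0 c := by
  have hc : 0 ≤ c := by linarith
  refine ⟨sub_nonneg.2 (max_le_max_right 0 hpq), sub_le_iff_le_add'.2 ?_⟩
  exact max_le (hqp.trans (add_le_add_left (le_max_left p 0) c))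
    (add_nonneg (relu_nonneg p) hc)

noncomputable def clippedLowerBound (a c x : ℝ) : ℝ :=
  relu (relu (relu x - a) - relu (relu (x - c) - a))

noncomputable def clippedUpperBound (b c x : ℝ) : ℝ :=
  relu (relu (-relu x + b) - relu (-relu (x + c) + b))

noncomputable def softAnd (c e u v : ℝ) : ℝ :=
  relu (u + v - (2 * c - e))

section BoundWidgets

variable {a b c x : ℝ}

lemma clippedLowerBound_mem_Icc (hc : 0 ≤ c) : clippedLowerBound a c x ∈ Icc 0 c := by
  have hstep := relu_sub_relu_mem_Icc (p := x - c) (q := x) (c := c) (by linarith) (by linarith)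
  have hdiff := relu_sub_relu_mem_Icc (p := relu (x - c) - a) (q := relu x - a) (c := c)
    (by linarith [hstep.1]) (by linarith [hstep.2])
  rwa [clippedLowerBound, relu_of_nonneg hdiff.1]

lemma clippedUpperBound_mem_Icc (hc : 0 ≤ c) : clippedUpperBound b c x ∈ Icc 0 c := by
  have hstep := relu_sub_relu_mem_Icc (p := x) (q := x + c) (c := c) (by linarith) le_rfl
  have hdiff := relu_sub_relu_mem_Icc (p := -relu (x + c) + b) (q := -relu x + b) (c := c)
    (by linarith [hstep.1]) (by linarith [hstep.2])
  rwa [clippedUpperBound, relu_of_nonneg hdiff.1]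

lemma clippedLowerBound_of_le (ha : 0 ≤ a) (hx : x ≤ a) : clippedLowerBound a c x = 0 := by
  have hoff : relu (relu x - a) = 0 := relu_of_nonpos (sub_nonpos.2 (max_le hx ha))
  rw [clippedLowerBound, hoff, zero_sub]
  exact relu_of_nonpos (neg_nonpos.2 (relu_nonneg _))

lemma clippedUpperBound_of_ge (hx : b ≤ x) : clippedUpperBound b c x = 0 := by
  have hxr : x ≤ relu x := le_max_left x 0
  have hoff : relu (-relu x + b) = 0 := relu_of_nonpos (by linarith)
  rw [clippedUpperBound, hoff, zero_sub]
  exact relu_of_nonpos (neg_nonpos.2 (relu_nonneg _))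

lemma clippedLowerBound_of_add_le (hc : 0 ≤ c) (ha : 0 ≤ a) (hx : a + c ≤ x) :
    clippedLowerBound a c x = c := by
  rw [clippedLowerBound, relu_of_nonneg (x := x) (by linarith),
    relu_of_nonneg (x := x - c) (by linarith), relu_of_nonneg (x := x - a) (by linarith),
    relu_of_nonneg (x := x - c - a) (by linarith)]
  ring_nf
  exact relu_of_nonneg hc

lemma clippedUpperBound_of_add_le (hc : 0 ≤ c) (hx₀ : 0 ≤ x) (hx : x + c ≤ b) :
    clippedUpperBound b c x = c := by
  rw [clippedUpperBound, relu_of_nonneg hx₀, relu_of_nonneg (x := x + c) (by linarith),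
    relu_of_nonneg (x := -x + b) (by linarith), relu_of_nonneg (x := -(x + c) + b) (by linarith)]
  ring_nf
  exact relu_of_nonneg hc

end BoundWidgets

section SoftAnd

variable {c e u v : ℝ}

lemma softAnd_le (he : 0 ≤ e) (hu : u ≤ c) (hv : v ≤ c) : softAnd c e u v ≤ e :=
  max_le (by linarith) he

lemma softAnd_zero_left (hec : e ≤ c) (hv : v ≤ c) : softAnd c e 0 v = 0 :=
  relu_of_nonpos (by linarith)

lemma softAnd_zero_right (hec : e ≤ c) (hu : u ≤ c) : softAnd c e u 0 = 0 :=
  relu_of_nonpos (by linarith)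

lemma softAnd_self (he : 0 ≤ e) : softAnd c e c c = e := by
  rw [softAnd, show c + c - (2 * c - e) = e by ring]
  exact relu_of_nonneg he

end SoftAnd

theorem scalar_region_selection_widget_general
    (t εLB εUB εCLIP εAND : ℝ)
    (ht : 0 ≤ t - εLB) (hand0 : 0 < εAND) (hand1 : εAND ≤ εCLIP)
    (o₁ o₂ A : ℝ → ℝ)
    (ho₁ : ∀ x : ℝ, o₁ x =
      relu (relu (relu x - (t - εLB)) - relu (relu (x - εCLIP) - (t - εLB))))
    (ho₂ : ∀ x : ℝ, o₂ x =
      relu (relu (-relu x + (t + εUB)) - relu (-relu (x + εCLIP) + (t + εUB))))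
    (hA : ∀ x : ℝ, A x = relu (o₁ x + o₂ x - (2 * εCLIP - εAND))) :
    (∀ x : ℝ, x ≤ t - εLB ∨ t + εUB ≤ x → A x = 0) ∧
    (∀ x : ℝ, t - εLB + εCLIP ≤ x → x ≤ t + εUB - εCLIP → A x = εAND) ∧
    (∀ x : ℝ, 0 ≤ A x ∧ A x ≤ εAND) := by
  have hε : 0 ≤ εAND := hand0.le
  have hc : 0 ≤ εCLIP := hε.trans hand1
  obtain rfl : o₁ = clippedLowerBound (t - εLB) εCLIP := funext ho₁
  obtain rfl : o₂ = clippedUpperBound (t + εUB) εCLIP := funext ho₂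
  have hA' : ∀ x, A x = softAnd εCLIP εAND _ _ := hA
  refine ⟨?_, ?_, fun x => ?_⟩
  · rintro x (hx | hx) <;> rw [hA']
    · rw [clippedLowerBound_of_le ht hx]
      exact softAnd_zero_left hand1 (clippedUpperBound_mem_Icc hc).2
    · rw [clippedUpperBound_of_ge hx]
      exact softAnd_zero_right hand1 (clippedLowerBound_mem_Icc hc).2
  · intro x hlo hhi
    rw [hA', clippedLowerBound_of_add_le hc ht hlo,
      clippedUpperBound_of_add_le hc (by linarith) (by linarith)]
    exact softAnd_self hε
  · rw [hA']
    exact ⟨relu_nonneg _, softAnd_le hε (clippedLowerBound_mem_Icc hc).2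
      (clippedUpperBound_mem_Icc hc).2⟩

/-- Scalar Region Selection Widget soundness: composing the Clipped Lower Bound
Widget `o₁`, the Clipped Upper Bound Widget `o₂`, and the Soft AND Widget yields
a function that is `0` outside the target interval, exactly `εAND` deep inside
it, and always bounded between `0` and `εAND`. -/
theorem scalar_region_selection_widget
    (t εLB εUB εCLIP εAND : ℝ)
    (ht : 0 ≤ t - εLB) (hand0 : 0 < εAND) (hand1 : εAND ≤ εCLIP)
    (hsep : t - εLB + εCLIP ≤ t + εUB - εCLIP)
    (o₁ o₂ A : ℝ → ℝ)
    (ho₁ : ∀ x : ℝ, o₁ x =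
      relu (relu (relu x - (t - εLB)) - relu (relu (x - εCLIP) - (t - εLB))))
    (ho₂ : ∀ x : ℝ, o₂ x =
      relu (relu (-relu x + (t + εUB)) - relu (-relu (x + εCLIP) + (t + εUB))))
    (hA : ∀ x : ℝ, A x = relu (o₁ x + o₂ x - (2 * εCLIP - εAND))) :
    (∀ x : ℝ, x ≤ t - εLB ∨ t + εUB ≤ x → A x = 0) ∧
    (∀ x : ℝ, t - εLB + εCLIP ≤ x → x ≤ t + εUB - εCLIP → A x = εAND) ∧
    (∀ x : ℝ, 0 ≤ A x ∧ A x ≤ εAND) :=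
  scalar_region_selection_widget_general t εLB εUB εCLIP εAND ht hand0 hand1 o₁ o₂ A ho₁ ho₂ hA
end
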